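/- arXiv:1910.07326 — 4 statements merged into one kernel-verified Lean document; each statement's English description precedes it below -/
import Mathlib

section
/- The function E(λ) = (9(8λ² + (1-λ)²)/(2λ² + (1-λ)²)) · (2λ²/(8λ² + (1-λ)²) - 1/3 + (2/3)·√((8λ² + (1-λ)²)/(20λ² + (1-λ)²))) is monotone increasing on the interval [0,1]. -/
noncomputable def E (l : ℝ) : ℝ :=
  (9 * (8 * l ^ 2 + (1 - l) ^ 2) / (2 * l ^ 2 + (1 - l) ^ 2)) *
    (2 * l ^ 2 / (8 * l ^ 2 + (1 - l) ^ 2) - 1 / 3 +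
      (2 / 3) * Real.sqrt ((8 * l ^ 2 + (1 - l) ^ 2) / (20 * l ^ 2 + (1 - l) ^ 2)))

noncomputable def gE (l : ℝ) : ℝ :=
  (8 * l ^ 2 + (1 - l) ^ 2) ^ 3 /
    ((2 * l ^ 2 + (1 - l) ^ 2) ^ 2 * (20 * l ^ 2 + (1 - l) ^ 2))

lemma hApos (l : ℝ) : 0 < 8 * l ^ 2 + (1 - l) ^ 2 := by nlinarith [sq_nonneg (9 * l - 1)]
lemma hBpos (l : ℝ) : 0 < 2 * l ^ 2 + (1 - l) ^ 2 := by nlinarith [sq_nonneg (3 * l - 1)]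
lemma hCpos (l : ℝ) : 0 < 20 * l ^ 2 + (1 - l) ^ 2 := by nlinarith [sq_nonneg (21 * l - 1)]

lemma hE_eq (l : ℝ) : E l = -3 + 6 * Real.sqrt (gE l) := by
  have hA := hApos l
  have hB := hBpos l
  have hC := hCpos l
  have hs : Real.sqrt (gE l) =
      ((8 * l ^ 2 + (1 - l) ^ 2) / (2 * l ^ 2 + (1 - l) ^ 2)) *
        Real.sqrt ((8 * l ^ 2 + (1 - l) ^ 2) / (20 * l ^ 2 + (1 - l) ^ 2)) := by
    have hge : gE l = ((8 * l ^ 2 + (1 - l) ^ 2) / (2 * l ^ 2 + (1 - l) ^ 2)) ^ 2 *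
        ((8 * l ^ 2 + (1 - l) ^ 2) / (20 * l ^ 2 + (1 - l) ^ 2)) := by
      unfold gE; field_simp
    rw [hge, Real.sqrt_mul (sq_nonneg _), Real.sqrt_sq (by positivity)]
  rw [hs]
  unfold E
  set s := Real.sqrt ((8 * l ^ 2 + (1 - l) ^ 2) / (20 * l ^ 2 + (1 - l) ^ 2)) with hsdef
  field_simp
  have hB' : l ^ 2 * 2 + (1 - l) ^ 2 ≠ 0 := by nlinarith
  rw [div_eq_iff hB']
  linear_combination (-3 * (8 * l ^ 2 + (1 - l) ^ 2) * s) * (div_mul_cancel₀ (6:ℝ) hB')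

lemma hasDerivAt_gE (x : ℝ) :
    HasDerivAt gE
      ((432 * x ^ 3 * (1 - x)) * (8 * x ^ 2 + (1 - x) ^ 2) ^ 2 /
        ((2 * x ^ 2 + (1 - x) ^ 2) ^ 3 * (20 * x ^ 2 + (1 - x) ^ 2) ^ 2)) x := by
  have hA : HasDerivAt (fun l : ℝ => 8 * l ^ 2 + (1 - l) ^ 2) (18 * x - 2) x := by
    have h1 : HasDerivAt (fun l : ℝ => 8 * l ^ 2) (8 * (2 * x ^ 1)) x :=
      (hasDerivAt_pow 2 x).const_mul 8
    have h2 : HasDerivAt (fun l : ℝ => (1 - l) ^ 2)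
        ((2 : ℕ) * (1 - x) ^ 1 * (-1)) x :=
      ((hasDerivAt_id x).const_sub 1).pow 2
    have := h1.add h2
    refine this.congr_deriv ?_
    push_cast
    ring
  have hB : HasDerivAt (fun l : ℝ => 2 * l ^ 2 + (1 - l) ^ 2) (6 * x - 2) x := by
    have h1 : HasDerivAt (fun l : ℝ => 2 * l ^ 2) (2 * (2 * x ^ 1)) x :=
      (hasDerivAt_pow 2 x).const_mul 2
    have h2 : HasDerivAt (fun l : ℝ => (1 - l) ^ 2)
        ((2 : ℕ) * (1 - x) ^ 1 * (-1)) x :=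
      ((hasDerivAt_id x).const_sub 1).pow 2
    have := h1.add h2
    refine this.congr_deriv ?_
    push_cast
    ring
  have hC : HasDerivAt (fun l : ℝ => 20 * l ^ 2 + (1 - l) ^ 2) (42 * x - 2) x := by
    have h1 : HasDerivAt (fun l : ℝ => 20 * l ^ 2) (20 * (2 * x ^ 1)) x :=
      (hasDerivAt_pow 2 x).const_mul 20
    have h2 : HasDerivAt (fun l : ℝ => (1 - l) ^ 2)
        ((2 : ℕ) * (1 - x) ^ 1 * (-1)) x :=
      ((hasDerivAt_id x).const_sub 1).pow 2
    have := h1.add h2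
    refine this.congr_deriv ?_
    push_cast
    ring
  have hN : HasDerivAt (fun l : ℝ => (8 * l ^ 2 + (1 - l) ^ 2) ^ 3)
      ((3 : ℕ) * (8 * x ^ 2 + (1 - x) ^ 2) ^ 2 * (18 * x - 2)) x := hA.pow 3
  have hB2 : HasDerivAt (fun l : ℝ => (2 * l ^ 2 + (1 - l) ^ 2) ^ 2)
      ((2 : ℕ) * (2 * x ^ 2 + (1 - x) ^ 2) ^ 1 * (6 * x - 2)) x := hB.pow 2
  have hD : HasDerivAt
      (fun l : ℝ => (2 * l ^ 2 + (1 - l) ^ 2) ^ 2 * (20 * l ^ 2 + (1 - l) ^ 2))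
      (((2 : ℕ) * (2 * x ^ 2 + (1 - x) ^ 2) ^ 1 * (6 * x - 2)) *
          (20 * x ^ 2 + (1 - x) ^ 2) +
        (2 * x ^ 2 + (1 - x) ^ 2) ^ 2 * (42 * x - 2)) x := hB2.mul hC
  have hDne : (2 * x ^ 2 + (1 - x) ^ 2) ^ 2 * (20 * x ^ 2 + (1 - x) ^ 2) ≠ 0 := by
    have := hBpos x; have := hCpos x; positivity
  have := hN.div hD hDne
  refine this.congr_deriv ?_
  have hB0 := (hBpos x).ne'
  have hC0 := (hCpos x).ne'
  field_simp
  ring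

lemma hgE_mono : MonotoneOn gE (Set.Icc 0 1) := by
  have hdiff : Differentiable ℝ gE := fun x => (hasDerivAt_gE x).differentiableAt
  apply monotoneOn_of_deriv_nonneg (convex_Icc 0 1) hdiff.continuous.continuousOn
    (hdiff.differentiableOn)
  intro x hx
  rw [interior_Icc] at hx
  rw [(hasDerivAt_gE x).deriv]
  apply div_nonneg
  · have h1 : (0 : ℝ) ≤ 432 * x ^ 3 * (1 - x) := by
      have := hx.1.le; have := hx.2.le; nlinarith [pow_nonneg hx.1.le 3]
    exact mul_nonneg h1 (sq_nonneg _)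
  · have := hBpos x; have := hCpos x; positivity

theorem stmt_2 : MonotoneOn E (Set.Icc 0 1) := by
  intro x hx y hy hxy
  rw [hE_eq x, hE_eq y]
  have := Real.sqrt_le_sqrt (hgE_mono hx hy hxy)
  linarith
end

section
/- For all λ ∈ [0,1], the value E(λ) = (9(8λ² + (1-λ)²)/(2λ² + (1-λ)²)) · (2λ²/(8λ² + (1-λ)²) - 1/3 + (2/3)·√((8λ² + (1-λ)²)/(20λ² + (1-λ)²))) satisfies 3 ≤ E(λ) ≤ 24√(2/5) - 3; in particular E attains its maximum on [0,1] at λ = 1 and its minimum at λ = 0. -/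
lemma E_bounds (l : ℝ) : 3 ≤ E l ∧ E l ≤ 24 * Real.sqrt (2 / 5) - 3 := by
  set A : ℝ := 8 * l ^ 2 + (1 - l) ^ 2 with hA
  set B : ℝ := 2 * l ^ 2 + (1 - l) ^ 2 with hB
  set C : ℝ := 20 * l ^ 2 + (1 - l) ^ 2 with hC
  have ha : 0 < A := by nlinarith [sq_nonneg (9 * l - 1), sq_nonneg l]
  have hb : 0 < B := by nlinarith [sq_nonneg (3 * l - 1), sq_nonneg l]
  have hc : 0 < C := by nlinarith [sq_nonneg (21 * l - 1), sq_nonneg l]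
  have hsAC : Real.sqrt (A / C) ^ 2 = A / C := by
    rw [Real.sq_sqrt (by positivity)]
  have hkey : E l = 6 * ((A / B) * Real.sqrt (A / C)) - 3 := by
    rw [E]
    rw [← hA, ← hB, ← hC]
    field_simp
    ring
  have hsq : Real.sqrt (A ^ 3 / (B ^ 2 * C)) = (A / B) * Real.sqrt (A / C) := by
    have : A ^ 3 / (B ^ 2 * C) = (A / B) ^ 2 * (A / C) := by
      field_simp
    rw [this, Real.sqrt_mul (sq_nonneg _), Real.sqrt_sq (by positivity)]
  rw [hkey, ← hsq]
  constructor
  · have h1 : 1 ≤ A ^ 3 / (B ^ 2 * C) := by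
      rw [le_div_iff₀ (by positivity)]
      rw [hA, hB, hC]
      nlinarith [mul_nonneg (mul_nonneg (sq_nonneg l) (sq_nonneg l)) (sq_nonneg l),
        mul_nonneg (mul_nonneg (sq_nonneg l) (sq_nonneg l)) (sq_nonneg (1 - l)),
        mul_nonneg (mul_nonneg (sq_nonneg l) (sq_nonneg (1 - l))) (sq_nonneg (1 - l)),
        mul_nonneg (mul_nonneg (sq_nonneg (1 - l)) (sq_nonneg (1 - l))) (sq_nonneg (1 - l))]
    have : 1 ≤ Real.sqrt (A ^ 3 / (B ^ 2 * C)) := by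
      rw [show (1 : ℝ) = Real.sqrt 1 by simp]
      exact Real.sqrt_le_sqrt (by linarith)
    linarith
  · have h2 : A ^ 3 / (B ^ 2 * C) ≤ 32 / 5 := by
      rw [div_le_div_iff₀ (by positivity) (by norm_num)]
      rw [hA, hB, hC]
      nlinarith [mul_nonneg (mul_nonneg (sq_nonneg l) (sq_nonneg l)) (sq_nonneg l),
        mul_nonneg (mul_nonneg (sq_nonneg l) (sq_nonneg l)) (sq_nonneg (1 - l)),
        mul_nonneg (mul_nonneg (sq_nonneg l) (sq_nonneg (1 - l))) (sq_nonneg (1 - l)),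
        mul_nonneg (mul_nonneg (sq_nonneg (1 - l)) (sq_nonneg (1 - l))) (sq_nonneg (1 - l))]
    have h3 : Real.sqrt (A ^ 3 / (B ^ 2 * C)) ≤ Real.sqrt (32 / 5) :=
      Real.sqrt_le_sqrt h2
    have h4 : Real.sqrt (32 / 5) = 4 * Real.sqrt (2 / 5) := by
      rw [show (32 / 5 : ℝ) = 4 ^ 2 * (2 / 5) by norm_num,
        Real.sqrt_mul (by positivity), Real.sqrt_sq (by norm_num)]
    linarith [h3, h4.le, h4.ge]

theorem stmt_3 :
    (∀ l ∈ Set.Icc (0 : ℝ) 1, 3 ≤ E l ∧ E l ≤ 24 * Real.sqrt (2 / 5) - 3) ∧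
    E 1 = 24 * Real.sqrt (2 / 5) - 3 ∧ E 0 = 3 := by
  refine ⟨fun l _ => E_bounds l, ?_, ?_⟩
  · rw [E]
    norm_num
    ring
  · rw [E]
    norm_num
end

section
/- For every real M ≥ 0, the integral ∫_{-π/2}^{π/2} cos θ · |cos²θ - (M²/4)·sin²θ| dθ equals 2·(M²/12 - 2/3 + (4/3)·√(4/(4 + M²))). -/
/-! Substituting `u = sin θ` and `cos² θ = 1 - sin² θ` turns the integral into
`∫_{-1}^{1} |1 - a² u²| du` with `a² = 1 + M²/4`. The integrand changes sign at `u = ±1/a`, and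
integrating the polynomial over the three pieces gives `2 (a²/3 - 1) + 8/(3a)`, where
`1/a = √(4/(4 + M²))`. -/

open Real intervalIntegral

theorem integral_mul_cos_comp_sin {g : ℝ → ℝ} (hg : Continuous g) :
    ∫ θ in (-(π / 2))..(π / 2), cos θ * g (sin θ) = ∫ u in (-1 : ℝ)..1, g u := by
  have h := integral_comp_mul_deriv (a := -(π / 2)) (b := π / 2) (fun x _ => hasDerivAt_sin x)
    continuous_cos.continuousOn hg
  simpa only [Function.comp_apply, mul_comm, sin_neg, sin_pi_div_two] using h

theorem integral_one_sub_mul_sq (k p q : ℝ) :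
    ∫ u in p..q, (1 - k * u ^ 2) = (q - p) - k * (q ^ 3 - p ^ 3) / 3 := by
  have hsq : IntervalIntegrable (fun u => k * u ^ 2) MeasureTheory.volume p q :=
    ((continuous_pow 2).intervalIntegrable p q).const_mul k
  rw [integral_sub intervalIntegrable_const hsq, integral_const_mul, integral_pow,
    integral_const, smul_eq_mul, mul_one]
  ring

theorem one_sub_sq_mul_sq_nonneg {a u : ℝ} (ha : 0 < a) (hu : |u| ≤ a⁻¹) :
    0 ≤ 1 - a ^ 2 * u ^ 2 := by
  have h : (a * |u|) ^ 2 ≤ 1 :=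
    pow_le_one₀ (by positivity) (by simpa [ha.ne'] using mul_le_mul_of_nonneg_left hu ha.le)
  rw [mul_pow, sq_abs] at h
  linarith

theorem one_sub_sq_mul_sq_nonpos {a u : ℝ} (ha : 0 < a) (hu : a⁻¹ ≤ |u|) :
    1 - a ^ 2 * u ^ 2 ≤ 0 := by
  have h : 1 ≤ (a * |u|) ^ 2 := one_le_pow₀ ((inv_le_iff_one_le_mul₀' ha).mp hu)
  rw [mul_pow, sq_abs] at h
  linarith

theorem integral_abs_one_sub_sq_mul_sq {a : ℝ} (ha : 1 ≤ a) :
    ∫ u in (-1 : ℝ)..1, |1 - a ^ 2 * u ^ 2| = 2 * (a ^ 2 / 3 - 1) + 8 / (3 * a) := by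
  have ha0 : 0 < a := by linarith
  set c := a⁻¹ with hc
  have hc0 : 0 < c := inv_pos.mpr ha0
  have hc1 : c ≤ 1 := inv_le_one_of_one_le₀ ha
  have hint (p q : ℝ) :
      IntervalIntegrable (fun u => |1 - a ^ 2 * u ^ 2|) MeasureTheory.volume p q :=
    (by fun_prop : Continuous fun u : ℝ => |1 - a ^ 2 * u ^ 2|).intervalIntegrable p q
  have hleft : ∫ u in (-1 : ℝ)..(-c), |1 - a ^ 2 * u ^ 2| =
      -∫ u in (-1 : ℝ)..(-c), (1 - a ^ 2 * u ^ 2) := by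
    rw [← integral_neg]
    refine integral_congr fun u hu => ?_
    rw [Set.uIcc_of_le (by linarith)] at hu
    exact abs_of_nonpos (one_sub_sq_mul_sq_nonpos ha0 (le_abs.mpr (Or.inr (by linarith [hu.2]))))
  have hmid : ∫ u in (-c)..c, |1 - a ^ 2 * u ^ 2| = ∫ u in (-c)..c, (1 - a ^ 2 * u ^ 2) := by
    refine integral_congr fun u hu => ?_
    rw [Set.uIcc_of_le (by linarith)] at hu
    exact abs_of_nonneg (one_sub_sq_mul_sq_nonneg ha0 (abs_le.mpr hu))
  have hright : ∫ u in c..(1 : ℝ), |1 - a ^ 2 * u ^ 2| =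
      -∫ u in c..(1 : ℝ), (1 - a ^ 2 * u ^ 2) := by
    rw [← integral_neg]
    refine integral_congr fun u hu => ?_
    rw [Set.uIcc_of_le hc1] at hu
    exact abs_of_nonpos (one_sub_sq_mul_sq_nonpos ha0 (le_abs.mpr (Or.inl hu.1)))
  rw [← integral_add_adjacent_intervals (hint (-1) (-c)) (hint (-c) 1),
    ← integral_add_adjacent_intervals (hint (-c) c) (hint c 1), hleft, hmid, hright]
  simp only [integral_one_sub_mul_sq, hc]
  field_simp
  ring

theorem stmt_6_general (M : ℝ) :
    ∫ θ in (-(π / 2))..(π / 2),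
        Real.cos θ * |Real.cos θ ^ 2 - (M ^ 2 / 4) * Real.sin θ ^ 2| =
      2 * (M ^ 2 / 12 - 2 / 3 + (4 / 3) * Real.sqrt (4 / (4 + M ^ 2))) := by
  set a := √(1 + M ^ 2 / 4)
  have ha2 : a ^ 2 = 1 + M ^ 2 / 4 := sq_sqrt (by positivity)
  have ha1 : 1 ≤ a := one_le_sqrt.mpr (le_add_of_nonneg_right (by positivity))
  have hroot : √(4 / (4 + M ^ 2)) = a⁻¹ := by
    rw [← sqrt_inv]
    congr 1
    field_simp
  have hintegrand (θ : ℝ) :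
      cos θ ^ 2 - M ^ 2 / 4 * sin θ ^ 2 = 1 - a ^ 2 * sin θ ^ 2 := by
    rw [cos_sq', ha2]
    ring
  simp_rw [hintegrand]
  rw [integral_mul_cos_comp_sin (g := fun u => |1 - a ^ 2 * u ^ 2|) (by fun_prop),
    integral_abs_one_sub_sq_mul_sq ha1, hroot, ha2]
  field_simp
  ring

theorem stmt_6 (M : ℝ) (hM : 0 ≤ M) :
    ∫ θ in (-(π / 2))..(π / 2),
        Real.cos θ * |Real.cos θ ^ 2 - (M ^ 2 / 4) * Real.sin θ ^ 2| =
      2 * (M ^ 2 / 12 - 2 / 3 + (4 / 3) * Real.sqrt (4 / (4 + M ^ 2))) :=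
  stmt_6_general M
end

section
/- For every real M ≥ 0, the improper integral ∫₀^∞ r³ e^{-r} dr equals 6, and hence (M²/2)·∫_{-π/2}^{π/2} ∫₀^∞ r³ cos θ · |cos²θ - (M²/4) sin²θ| · e^{-r} dr dθ = 6M²·(M²/12 - 2/3 + (4/3)√(4/(4 + M²))). -/
open Real MeasureTheory

lemma part1' : (∫ r in Set.Ioi (0 : ℝ), r ^ 3 * Real.exp (-r)) = 6 := by
  have h := Real.integral_rpow_mul_exp_neg_mul_Ioi (a := 4) (r := 1) (by norm_num) (by norm_num)
  have heq : ∀ t ∈ Set.Ioi (0 : ℝ),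
      t ^ ((4 : ℝ) - 1) * Real.exp (-(1 * t)) = t ^ 3 * Real.exp (-t) := by
    intro t ht
    rw [show (4 : ℝ) - 1 = ((3 : ℕ) : ℝ) by norm_num, Real.rpow_natCast, one_mul]
  rw [MeasureTheory.setIntegral_congr_fun measurableSet_Ioi heq] at h
  rw [h, show (4 : ℝ) = (3 : ℕ) + 1 by norm_num, Real.Gamma_nat_eq_factorial]
  norm_num [Nat.factorial]

lemma computeJ (a : ℝ) (ha : 1 ≤ a) :
    (∫ u in (-1 : ℝ)..1, |1 - a ^ 2 * u ^ 2|) = 2 * (a ^ 2 / 3 - 1 + 4 / (3 * a)) := by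
  have ha0 : 0 < a := by linarith
  obtain ⟨b, hbdef⟩ : ∃ b : ℝ, b = 1 / a := ⟨_, rfl⟩
  have hb0 : 0 < b := by rw [hbdef]; positivity
  have hab : a * b = 1 := by rw [hbdef]; field_simp
  have hab2 : a ^ 2 * b ^ 2 = 1 := by linear_combination (a * b + 1) * hab
  have hb1 : b ≤ 1 := by nlinarith
  have hc : Continuous fun u : ℝ => |1 - a ^ 2 * u ^ 2| := by continuity
  have hc' : Continuous fun u : ℝ => 1 - a ^ 2 * u ^ 2 := by continuity
  have hc'' : Continuous fun u : ℝ => a ^ 2 * u ^ 2 - 1 := by continuity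
  have hF : ∀ u : ℝ, HasDerivAt (fun u : ℝ => u - a ^ 2 * u ^ 3 / 3) (1 - a ^ 2 * u ^ 2) u := by
    intro u
    have h1 : HasDerivAt (fun u : ℝ => u - a ^ 2 * u ^ 3 / 3)
        (1 - a ^ 2 * ((3 : ℕ) * u ^ (3 - 1)) / 3) u :=
      (hasDerivAt_id u).sub (((hasDerivAt_pow 3 u).const_mul (a ^ 2)).div_const 3)
    convert h1 using 1
    push_cast; ring
  have hG : ∀ u : ℝ, HasDerivAt (fun u : ℝ => a ^ 2 * u ^ 3 / 3 - u) (a ^ 2 * u ^ 2 - 1) u := by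
    intro u
    have h1 : HasDerivAt (fun u : ℝ => a ^ 2 * u ^ 3 / 3 - u)
        (a ^ 2 * ((3 : ℕ) * u ^ (3 - 1)) / 3 - 1) u :=
      (((hasDerivAt_pow 3 u).const_mul (a ^ 2)).div_const 3).sub (hasDerivAt_id u)
    convert h1 using 1
    push_cast; ring
  have I2 : (∫ u in (-b)..b, |1 - a ^ 2 * u ^ 2|) = 4 * b / 3 := by
    have habs : Set.EqOn (fun u : ℝ => |1 - a ^ 2 * u ^ 2|) (fun u : ℝ => 1 - a ^ 2 * u ^ 2)
        (Set.uIcc (-b) b) := by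
      intro u hu
      rw [Set.uIcc_of_le (by linarith)] at hu
      obtain ⟨h1, h2⟩ := hu
      have hu2 : u ^ 2 ≤ b ^ 2 := by nlinarith
      have : a ^ 2 * u ^ 2 ≤ 1 := by nlinarith [sq_nonneg a]
      simp only [abs_of_nonneg (by linarith : (0:ℝ) ≤ 1 - a ^ 2 * u ^ 2)]
    rw [intervalIntegral.integral_congr habs,
      intervalIntegral.integral_eq_sub_of_hasDerivAt (fun u _ => hF u)
        (hc'.intervalIntegrable _ _)]
    linear_combination (-(2 * b / 3) * (a * b + 1)) * hab
  have I3 : (∫ u in b..1, |1 - a ^ 2 * u ^ 2|) = a ^ 2 / 3 - 1 + 2 * b / 3 := by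
    have habs : Set.EqOn (fun u : ℝ => |1 - a ^ 2 * u ^ 2|) (fun u : ℝ => a ^ 2 * u ^ 2 - 1)
        (Set.uIcc b 1) := by
      intro u hu
      rw [Set.uIcc_of_le hb1] at hu
      obtain ⟨h1, h2⟩ := hu
      have hu2 : b ^ 2 ≤ u ^ 2 := by nlinarith
      have : 1 ≤ a ^ 2 * u ^ 2 := by nlinarith [sq_nonneg a]
      simp only [abs_of_nonpos (by linarith : 1 - a ^ 2 * u ^ 2 ≤ 0)]
      ring
    rw [intervalIntegral.integral_congr habs,
      intervalIntegral.integral_eq_sub_of_hasDerivAt (fun u _ => hG u)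
        (hc''.intervalIntegrable _ _)]
    linear_combination (-(b / 3) * (a * b + 1)) * hab
  have I1 : (∫ u in (-1 : ℝ)..(-b), |1 - a ^ 2 * u ^ 2|) = a ^ 2 / 3 - 1 + 2 * b / 3 := by
    have habs : Set.EqOn (fun u : ℝ => |1 - a ^ 2 * u ^ 2|) (fun u : ℝ => a ^ 2 * u ^ 2 - 1)
        (Set.uIcc (-1 : ℝ) (-b)) := by
      intro u hu
      rw [Set.uIcc_of_le (by linarith)] at hu
      obtain ⟨h1, h2⟩ := hu
      have hu2 : b ^ 2 ≤ u ^ 2 := by nlinarith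
      have : 1 ≤ a ^ 2 * u ^ 2 := by nlinarith [sq_nonneg a]
      simp only [abs_of_nonpos (by linarith : 1 - a ^ 2 * u ^ 2 ≤ 0)]
      ring
    rw [intervalIntegral.integral_congr habs,
      intervalIntegral.integral_eq_sub_of_hasDerivAt (fun u _ => hG u)
        (hc''.intervalIntegrable _ _)]
    linear_combination (-(b / 3) * (a * b + 1)) * hab
  have hs1 : (∫ u in (-1 : ℝ)..(-b), |1 - a ^ 2 * u ^ 2|) +
      (∫ u in (-b)..b, |1 - a ^ 2 * u ^ 2|) = ∫ u in (-1 : ℝ)..b, |1 - a ^ 2 * u ^ 2| :=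
    intervalIntegral.integral_add_adjacent_intervals (hc.intervalIntegrable _ _)
      (hc.intervalIntegrable _ _)
  have hs2 : (∫ u in (-1 : ℝ)..b, |1 - a ^ 2 * u ^ 2|) +
      (∫ u in b..(1 : ℝ), |1 - a ^ 2 * u ^ 2|) = ∫ u in (-1 : ℝ)..1, |1 - a ^ 2 * u ^ 2| :=
    intervalIntegral.integral_add_adjacent_intervals (hc.intervalIntegrable _ _)
      (hc.intervalIntegrable _ _)
  rw [← hs2, ← hs1, I1, I2, I3, hbdef]
  ring

theorem stmt_7 (M : ℝ) (hM : 0 ≤ M) :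
    (∫ r in Set.Ioi (0 : ℝ), r ^ 3 * Real.exp (-r)) = 6 ∧
    (M ^ 2 / 2) *
        ∫ θ in (-(π / 2))..(π / 2), ∫ r in Set.Ioi (0 : ℝ),
          r ^ 3 * Real.cos θ * |Real.cos θ ^ 2 - (M ^ 2 / 4) * Real.sin θ ^ 2| *
            Real.exp (-r) =
      6 * M ^ 2 * (M ^ 2 / 12 - 2 / 3 + (4 / 3) * Real.sqrt (4 / (4 + M ^ 2))) := by
  refine ⟨part1', ?_⟩
  set a : ℝ := Real.sqrt (1 + M ^ 2 / 4) with hadef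
  have ha2 : a ^ 2 = 1 + M ^ 2 / 4 := Real.sq_sqrt (by positivity)
  have ha1 : 1 ≤ a := by
    nlinarith [Real.sqrt_nonneg (1 + M ^ 2 / 4), ha2, sq_nonneg (a - 1)]
  have ha0 : 0 < a := by linarith
  -- the sqrt in the statement equals 1/a
  have hsq : Real.sqrt (4 / (4 + M ^ 2)) = 1 / a := by
    rw [show 4 / (4 + M ^ 2) = (1 / a) ^ 2 by rw [div_pow, one_pow, ha2]; field_simp]
    exact Real.sqrt_sq (by positivity)
  -- inner integral
  have hin : ∀ θ : ℝ, (∫ r in Set.Ioi (0 : ℝ),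
      r ^ 3 * Real.cos θ * |Real.cos θ ^ 2 - (M ^ 2 / 4) * Real.sin θ ^ 2| * Real.exp (-r))
      = (Real.cos θ * |1 - a ^ 2 * Real.sin θ ^ 2|) * 6 := by
    intro θ
    have h1 : Real.cos θ ^ 2 - (M ^ 2 / 4) * Real.sin θ ^ 2 = 1 - a ^ 2 * Real.sin θ ^ 2 := by
      rw [Real.cos_sq', ha2]; ring
    rw [← part1', ← MeasureTheory.integral_const_mul]
    congr 1
    funext r
    rw [h1]; ring
  rw [intervalIntegral.integral_congr (fun θ _ => hin θ)]
  -- substitution u = sin θ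
  have hsub : (∫ θ in (-(π / 2))..(π / 2), (Real.cos θ * |1 - a ^ 2 * Real.sin θ ^ 2|) * 6)
      = ∫ u in (-1 : ℝ)..1, |1 - a ^ 2 * u ^ 2| * 6 := by
    have h := intervalIntegral.integral_comp_smul_deriv
      (a := -(π / 2)) (b := π / 2)
      (f := Real.sin) (f' := Real.cos) (g := fun u : ℝ => |1 - a ^ 2 * u ^ 2| * 6)
      (fun x _ => Real.hasDerivAt_sin x) Real.continuousOn_cos
      (by continuity)
    simp only [Real.sin_neg, Real.sin_pi_div_two, smul_eq_mul, Function.comp] at h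
    rw [← h]
    congr 1
    funext θ
    ring
  rw [hsub, intervalIntegral.integral_mul_const, computeJ a ha1, hsq]
  linear_combination (2 * M ^ 2) * ha2
end
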